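/- Let a_1,...,a_n ∈ F_q^*, let C, C' be linear codes in F_q^n with C^⊥ = e·C' where e = (a_1^2,...,a_n^2). If C ∩ C' is one-dimensional, then the code a·C (with a = (a_1,...,a_n)) has one-dimensional Euclidean hull, i.e., dim((a·C) ∩ (a·C)^⊥) = 1. -/

import Mathlib

/-! Rescaling by `a` transports the pairing: `⟨y, a·c⟩ = ⟨a·y, c⟩`. Hence `(a·C)^⊥` is the preimage
of `C^⊥ = a·(a·C')` under `a·`, which is `a·C'` because `a·` is injective. So the hull of `a·C` is
`a·C ∩ a·C' = a·(C ∩ C')`, the injective image of a one-dimensional space. -/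

open Finset

def scaleMap {F : Type} [Field F] {n : ℕ} (a : Fin n → F) :
    (Fin n → F) →ₗ[F] (Fin n → F) :=
  LinearMap.pi fun i => a i • LinearMap.proj i

def dualCode {F : Type} [Field F] {n : ℕ} (C : Submodule F (Fin n → F)) :
    Submodule F (Fin n → F) where
  carrier := {y | ∀ c ∈ C, ∑ i, y i * c i = 0}
  add_mem' := by
    intro x y hx hy c hc
    simp only [Pi.add_apply, add_mul, Finset.sum_add_distrib, hx c hc, hy c hc, add_zero]
  zero_mem' := by intro c hc; simp
  smul_mem' := by
    intro r x hx c hc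
    simp only [Pi.smul_apply, smul_eq_mul, mul_assoc, ← Finset.mul_sum, hx c hc, mul_zero]

noncomputable def minDist {F : Type} [Field F] [DecidableEq F] {n : ℕ}
    (C : Submodule F (Fin n → F)) : ℕ :=
  sInf {w | ∃ c ∈ C, c ≠ 0 ∧ hammingNorm c = w}

section Scaling

variable {F : Type} [Field F] {n : ℕ}

lemma mem_dualCode {C : Submodule F (Fin n → F)} {y : Fin n → F} :
    y ∈ dualCode C ↔ ∀ c ∈ C, ∑ i, y i * c i = 0 := Iff.rfl

@[simp]
lemma scaleMap_apply (a x : Fin n → F) (i : Fin n) : scaleMap a x i = a i * x i := rfl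

lemma scaleMap_mul (a b : Fin n → F) : scaleMap (a * b) = scaleMap a ∘ₗ scaleMap b := by
  ext x i
  simp [mul_assoc]

lemma scaleMap_injective {a : Fin n → F} (ha : ∀ i, a i ≠ 0) : Function.Injective (scaleMap a) :=
  fun _ _ hxy => funext fun i => mul_left_cancel₀ (ha i) (congrFun hxy i)

lemma dualCode_map_scaleMap (a : Fin n → F) (C : Submodule F (Fin n → F)) :
    dualCode (C.map (scaleMap a)) = (dualCode C).comap (scaleMap a) := by
  ext y
  simp only [mem_dualCode, Submodule.mem_comap, Submodule.mem_map, forall_exists_index, and_imp,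
    forall_apply_eq_imp_iff₂, scaleMap_apply, mul_left_comm, mul_assoc]

lemma dualCode_map_scaleMap_eq_map_of_dualCode_eq {a : Fin n → F} (ha : ∀ i, a i ≠ 0)
    {C C' : Submodule F (Fin n → F)} (h : dualCode C = C'.map (scaleMap (a * a))) :
    dualCode (C.map (scaleMap a)) = C'.map (scaleMap a) := by
  rw [dualCode_map_scaleMap, h, scaleMap_mul, Submodule.map_comp,
    Submodule.comap_map_eq_of_injective (scaleMap_injective ha)]

end Scaling

theorem stmt3_general {F : Type} [Field F] {n : ℕ} (a : Fin n → F)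
    (ha : ∀ i, a i ≠ 0) (C C' : Submodule F (Fin n → F))
    (h : dualCode C = C'.map (scaleMap (fun i => (a i) ^ 2)))
    (hint : Module.finrank F ↥(C ⊓ C') = 1) :
    Module.finrank F ↥(C.map (scaleMap a) ⊓ dualCode (C.map (scaleMap a))) = 1 := by
  have hsq : (fun i => a i ^ 2) = a * a := funext fun i => sq (a i)
  rw [hsq] at h
  have hinj := scaleMap_injective ha
  rw [dualCode_map_scaleMap_eq_map_of_dualCode_eq ha h, ← Submodule.map_inf _ hinj, ← hint]
  exact (Submodule.equivMapOfInjective _ hinj (C ⊓ C')).finrank_eq.symm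

theorem stmt3 {F : Type} [Field F] [Fintype F] {n : ℕ} (a : Fin n → F)
    (ha : ∀ i, a i ≠ 0) (C C' : Submodule F (Fin n → F))
    (h : dualCode C = C'.map (scaleMap (fun i => (a i) ^ 2)))
    (hint : Module.finrank F ↥(C ⊓ C') = 1) :
    Module.finrank F ↥(C.map (scaleMap a) ⊓ dualCode (C.map (scaleMap a))) = 1 :=
  stmt3_general a ha C C' h hint
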